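/- Let G be a minimum counterexample to the statement 'every planar graph with maximum degree at most 6 has 2-distance chromatic number at most 20'. Then the minimum degree of G satisfies δ(G) ≥ 3. -/

import Mathlib

open Set

noncomputable section

namespace TwoDistance

/-- The degree of a vertex `v` in a graph `G`. -/
def vdeg {V : Type} (G : SimpleGraph V) (v : V) : ℕ := {w | G.Adj v w}.ncard

/-- The maximum degree `Δ(G)` of a graph `G`. -/
def maxDeg {V : Type} (G : SimpleGraph V) : ℕ := sSup (Set.range (vdeg G))

/-- The minimum degree `δ(G)` of a graph `G`. -/
def minDeg {V : Type} (G : SimpleGraph V) : ℕ := sInf (Set.range (vdeg G))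

/-- `n_k(v)`: the number of neighbours of `v` of degree `k`. -/
def nDeg {V : Type} (G : SimpleGraph V) (k : ℕ) (v : V) : ℕ :=
  {w | G.Adj v w ∧ vdeg G w = k}.ncard

/-- `n_{k⁻}(v)`: the number of neighbours of `v` of degree at most `k`. -/
def nDegLe {V : Type} (G : SimpleGraph V) (k : ℕ) (v : V) : ℕ :=
  {w | G.Adj v w ∧ vdeg G w ≤ k}.ncard

/-- A 2-distance `k`-coloring of `G`: distinct vertices at distance at most 2
(i.e. joined by a walk of length at most 2) get different colors. -/
def IsTwoDistColoring {V : Type} (G : SimpleGraph V) {k : ℕ} (φ : V → Fin k) : Prop :=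
  ∀ u v : V, u ≠ v → (∃ p : G.Walk u v, p.length ≤ 2) → φ u ≠ φ v

/-- The 2-distance chromatic number `χ₂(G)`. -/
def chi2 {V : Type} (G : SimpleGraph V) : ℕ :=
  sInf {k : ℕ | ∃ φ : V → Fin k, IsTwoDistColoring G φ}

/-- A (topological) embedding of a simple graph in the plane: vertices are mapped to
distinct points, edges to arcs between the endpoints, such that arcs are injective,
pass through no vertex point other than their endpoints, and two arcs of distinct
edges meet only in vertex points (hence only in common endpoints). -/
structure PlaneEmbedding {V : Type} (G : SimpleGraph V) where
  pos : V → ℝ × ℝ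
  pos_inj : Function.Injective pos
  arc : ∀ u v : V, G.Adj u v → Path (pos u) (pos v)
  arc_symm : ∀ (u v : V) (h : G.Adj u v), arc v u h.symm = (arc u v h).symm
  arc_inj : ∀ (u v : V) (h : G.Adj u v), Function.Injective (arc u v h)
  arc_vertex : ∀ (u v : V) (h : G.Adj u v) (t : unitInterval) (w : V),
      arc u v h t = pos w → w = u ∨ w = v
  arc_meet : ∀ (u v u' v' : V) (h : G.Adj u v) (h' : G.Adj u' v')
      (t t' : unitInterval), s(u, v) ≠ s(u', v') →
      arc u v h t = arc u' v' h' t' → ∃ w : V, arc u v h t = pos w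

/-- A graph is planar if it admits a plane embedding. -/
def Planar {V : Type} (G : SimpleGraph V) : Prop := Nonempty (PlaneEmbedding G)

/-- The size `|V(G)| + |E(G)|` of a graph. -/
def gsize {V : Type} (G : SimpleGraph V) : ℕ := Nat.card V + G.edgeSet.ncard

/-- A minimum counterexample to "every planar graph with maximum degree at most 6 has
2-distance chromatic number at most 20": a finite planar graph `G` with `Δ(G) ≤ 6` and
`χ₂(G) > 20` such that every planar graph `G'` with `Δ(G') ≤ Δ(G)` and
`|V(G')| + |E(G')| < |V(G)| + |E(G)|` satisfies `χ₂(G') ≤ 20`. -/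
def MinCounterexample {V : Type} (G : SimpleGraph V) : Prop :=
  Finite V ∧ Planar G ∧ maxDeg G ≤ 6 ∧ 20 < chi2 G ∧
    ∀ (W : Type) (G' : SimpleGraph W), Finite W → Planar G' →
      maxDeg G' ≤ maxDeg G → gsize G' < gsize G → chi2 G' ≤ 20

namespace PlaneEmbedding

variable {V : Type} {G : SimpleGraph V}

/-- The point set of the embedded graph. -/
def image (E : PlaneEmbedding G) : Set (ℝ × ℝ) :=
  Set.range E.pos ∪ ⋃ (u : V) (v : V) (h : G.Adj u v), Set.range (E.arc u v h)

/-- A face of the embedding: a connected component of the complement of the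
embedded graph. -/
def IsFace (E : PlaneEmbedding G) (F : Set (ℝ × ℝ)) : Prop :=
  ∃ x : ℝ × ℝ, x ∉ E.image ∧ F = connectedComponentIn (E.image)ᶜ x

/-- The edges on the boundary of a face. -/
def boundaryEdges (E : PlaneEmbedding G) (F : Set (ℝ × ℝ)) : Set (Sym2 V) :=
  {e | ∃ (u v : V) (h : G.Adj u v), e = s(u, v) ∧ Set.range (E.arc u v h) ⊆ closure F}

/-- The degree of a face: the number of edges in its boundary. -/
def faceDeg (E : PlaneEmbedding G) (F : Set (ℝ × ℝ)) : ℕ := (E.boundaryEdges F).ncard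

/-- A vertex is incident with a face if it lies on its boundary. -/
def VertexOnFace (E : PlaneEmbedding G) (v : V) (F : Set (ℝ × ℝ)) : Prop :=
  E.pos v ∈ closure F

/-- `m_k(v)`: the number of `k`-faces incident with `v`. -/
def mFace (E : PlaneEmbedding G) (k : ℕ) (v : V) : ℕ :=
  {F : Set (ℝ × ℝ) | E.IsFace F ∧ E.faceDeg F = k ∧ E.VertexOnFace v F}.ncard

/-- `m_{k⁺}(v)`: the number of faces of degree at least `k` incident with `v`. -/
def mFaceGe (E : PlaneEmbedding G) (k : ℕ) (v : V) : ℕ :=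
  {F : Set (ℝ × ℝ) | E.IsFace F ∧ k ≤ E.faceDeg F ∧ E.VertexOnFace v F}.ncard

end PlaneEmbedding

end TwoDistance

open TwoDistance TwoDistance.PlaneEmbedding

/-!
Let `v` be a vertex of degree at most 2. Delete `v` and join its (at most two) neighbours by an
edge routed along the two arcs through `v`. The result is still planar, no vertex degree grows,
and it has fewer vertices plus edges, so by minimality it has a 2-distance 20-colouring. Two
vertices at distance at most 2 in `G` stay at distance at most 2 after the operation, and at most
`2 · (6 + 1) = 14 < 20` vertices lie within distance 2 of `v`, so the colouring extends to `v`.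
-/

namespace TwoDistance

variable {V : Type} {G : SimpleGraph V}

section Coloring

def WithinTwo (G : SimpleGraph V) (u w : V) : Prop := G.Adj u w ∨ ∃ m, G.Adj u m ∧ G.Adj m w

lemma WithinTwo.symm {u w : V} (h : WithinTwo G u w) : WithinTwo G w u :=
  h.imp (fun h => h.symm) fun ⟨m, hum, hmw⟩ => ⟨m, hmw.symm, hum.symm⟩

lemma exists_walk_length_le_two_iff {u w : V} :
    (∃ p : G.Walk u w, p.length ≤ 2) ↔ u = w ∨ WithinTwo G u w := by
  constructor
  · rintro ⟨p, hp⟩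
    match p, hp with
    | .nil, _ => exact Or.inl rfl
    | .cons h .nil, _ => exact Or.inr (Or.inl h)
    | .cons h (.cons h' .nil), _ => exact Or.inr (Or.inr ⟨_, h, h'⟩)
    | .cons _ (.cons _ (.cons _ _)), hp => simp at hp
  · rintro (rfl | h | ⟨m, h, h'⟩)
    · exact ⟨.nil, by simp⟩
    · exact ⟨h.toWalk, by simp⟩
    · exact ⟨.cons h h'.toWalk, by simp⟩

lemma isTwoDistColoring_iff {k : ℕ} (φ : V → Fin k) :
    IsTwoDistColoring G φ ↔ ∀ u w, u ≠ w → WithinTwo G u w → φ u ≠ φ w := by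
  refine forall₂_congr fun u w => forall_congr' fun huw => ?_
  rw [exists_walk_length_le_two_iff, or_iff_right huw]

lemma chi2_le_of_isTwoDistColoring {k : ℕ} {φ : V → Fin k} (hφ : IsTwoDistColoring G φ) :
    chi2 G ≤ k :=
  Nat.sInf_le ⟨φ, hφ⟩

lemma chi2_eq_zero [IsEmpty V] : chi2 G = 0 :=
  Nat.le_zero.mp (chi2_le_of_isTwoDistColoring (φ := isEmptyElim) fun u => isEmptyElim u)

lemma exists_isTwoDistColoring_of_chi2_le [Finite V] {k : ℕ} (h : chi2 G ≤ k) :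
    ∃ φ : V → Fin k, IsTwoDistColoring G φ := by
  obtain ⟨n, ⟨e⟩⟩ := Finite.exists_equiv_fin V
  obtain ⟨φ, hφ⟩ : chi2 G ∈ {k | ∃ φ : V → Fin k, IsTwoDistColoring G φ} :=
    Nat.sInf_mem ⟨n, e, fun _ _ huv _ he => huv (e.injective he)⟩
  exact ⟨Fin.castLE h ∘ φ, fun u w huw hp he => hφ u w huw hp (Fin.castLE_injective h he)⟩

end Coloring

section Degree

lemma vdeg_le_maxDeg [Finite V] (G : SimpleGraph V) (x : V) : vdeg G x ≤ maxDeg G :=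
  le_csSup (finite_range _).bddAbove ⟨x, rfl⟩

lemma maxDeg_le_maxDeg {W : Type} [Finite V] {G' : SimpleGraph W}
    (h : ∀ x, ∃ y, vdeg G' x ≤ vdeg G y) : maxDeg G' ≤ maxDeg G := by
  rcases isEmpty_or_nonempty W with hW | hW
  · simp [maxDeg, range_eq_empty]
  · refine csSup_le (range_nonempty _) ?_
    rintro _ ⟨x, rfl⟩
    obtain ⟨y, hy⟩ := h x
    exact hy.trans (vdeg_le_maxDeg G y)

lemma exists_vdeg_eq_minDeg [Nonempty V] (G : SimpleGraph V) : ∃ v, vdeg G v = minDeg G :=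
  Nat.sInf_mem (range_nonempty _)

lemma ncard_withinTwo_le [Finite V] {Δ : ℕ} (hΔ : ∀ x, vdeg G x ≤ Δ) (v : V) :
    {x | WithinTwo G v x}.ncard ≤ vdeg G v * (Δ + 1) := by
  set N := (toFinite {x | G.Adj v x}).toFinset
  have hsub : {x | WithinTwo G v x} ⊆ ⋃ m ∈ N, insert m {x | G.Adj m x} := by
    rintro x (hx | ⟨m, hm, hmx⟩) <;> simp only [mem_iUnion, Finite.mem_toFinset, N]
    · exact ⟨x, hx, mem_insert x _⟩
    · exact ⟨m, hm, mem_insert_of_mem m hmx⟩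
  calc _ ≤ (⋃ m ∈ N, insert m {x | G.Adj m x}).ncard := ncard_le_ncard hsub
    _ ≤ ∑ m ∈ N, (insert m {x | G.Adj m x}).ncard := N.set_ncard_biUnion_le _
    _ ≤ N.card • (Δ + 1) := Finset.sum_le_card_nsmul _ _ _ fun m _ =>
      (ncard_insert_le _ _).trans (Nat.succ_le_succ (hΔ m))
    _ = vdeg G v * (Δ + 1) := by rw [smul_eq_mul, vdeg, ncard_eq_toFinset_card _]

lemma eq_or_eq_of_vdeg_le_two [Finite V] {v a b x : V} (hv : vdeg G v ≤ 2) (ha : G.Adj v a)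
    (hb : G.Adj v b) (hab : a ≠ b) (hx : G.Adj v x) : x = a ∨ x = b := by
  by_contra! hxab
  have : ({x, a, b} : Set V).ncard ≤ vdeg G v := by
    refine ncard_le_ncard ?_
    rintro _ (rfl | rfl | rfl) <;> assumption
  rw [ncard_eq_three.mpr ⟨x, a, b, hxab.1, hxab.2, hab, rfl⟩] at this
  omega

lemma sym2_eq_of_vdeg_le_two [Finite V] {v a b x y : V} (hv : vdeg G v ≤ 2) (ha : G.Adj v a)
    (hb : G.Adj v b) (hab : a ≠ b) (hx : G.Adj v x) (hy : G.Adj v y) (hxy : x ≠ y) :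
    s(x, y) = s(a, b) := by
  rcases eq_or_eq_of_vdeg_le_two hv ha hb hab hx with rfl | rfl <;>
    rcases eq_or_eq_of_vdeg_le_two hv ha hb hab hy with rfl | rfl <;>
    first | exact absurd rfl hxy | rfl | exact Sym2.eq_swap

end Degree

section Eliminate

def eliminate (G : SimpleGraph V) (v : V) : SimpleGraph {x // x ≠ v} where
  Adj x y := x ≠ y ∧ (G.Adj x y ∨ G.Adj x v ∧ G.Adj v y)
  symm := ⟨fun _ _ ⟨hne, h⟩ =>
    ⟨hne.symm, h.imp (fun h => h.symm) fun ⟨h₁, h₂⟩ => ⟨h₂.symm, h₁.symm⟩⟩⟩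
  loopless := ⟨fun _ h => h.1 rfl⟩

variable {v : V}

lemma eliminate_adj_of_adj {x y : {x // x ≠ v}} (h : G.Adj x y) : (eliminate G v).Adj x y :=
  ⟨fun e => h.ne (congrArg Subtype.val e), Or.inl h⟩

lemma withinTwo_eliminate {x y : {x // x ≠ v}} (hxy : x ≠ y) (h : WithinTwo G x y) :
    WithinTwo (eliminate G v) x y := by
  rcases h with h | ⟨m, hxm, hmy⟩
  · exact Or.inl (eliminate_adj_of_adj h)
  · by_cases hm : m = v
    · subst hm
      exact Or.inl ⟨hxy, Or.inr ⟨hxm, hmy⟩⟩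
    · exact Or.inr ⟨⟨m, hm⟩, eliminate_adj_of_adj hxm, eliminate_adj_of_adj hmy⟩

lemma isTwoDistColoring_extend [DecidableEq V] {k : ℕ} {φ : {x // x ≠ v} → Fin k}
    (hφ : IsTwoDistColoring (eliminate G v) φ) {c : Fin k}
    (hc : ∀ x : {x // x ≠ v}, WithinTwo G v x → φ x ≠ c) :
    IsTwoDistColoring G fun x => if h : x = v then c else φ ⟨x, h⟩ := by
  rw [isTwoDistColoring_iff] at hφ ⊢
  intro x y hxy hnear
  by_cases hx : x = v
  · subst hx
    rw [dif_pos rfl, dif_neg hxy.symm]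
    exact (hc ⟨y, hxy.symm⟩ hnear).symm
  by_cases hy : y = v
  · subst hy
    rw [dif_neg hx, dif_pos rfl]
    exact hc ⟨x, hx⟩ hnear.symm
  have hxy' : (⟨x, hx⟩ : {x // x ≠ v}) ≠ ⟨y, hy⟩ := fun e => hxy (congrArg (·.1) e)
  rw [dif_neg hx, dif_neg hy]
  exact hφ _ _ hxy' (withinTwo_eliminate hxy' hnear)

lemma chi2_le_of_chi2_eliminate_le [Finite V] {k : ℕ} (h : chi2 (eliminate G v) ≤ k)
    (hball : {x | WithinTwo G v x}.ncard < k) : chi2 G ≤ k := by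
  classical
  obtain ⟨φ, hφ⟩ := exists_isTwoDistColoring_of_chi2_le h
  set S := {x : {x // x ≠ v} | WithinTwo G v x}
  have hS : (φ '' S).ncard < Nat.card (Fin k) := calc
    _ ≤ S.ncard := ncard_image_le
    _ ≤ {x | WithinTwo G v x}.ncard :=
      ncard_le_ncard_of_injOn Subtype.val (fun _ hx => hx) Subtype.val_injective.injOn
    _ < Nat.card (Fin k) := by rwa [Nat.card_fin]
  obtain ⟨c, hc⟩ := (ne_univ_iff_exists_notMem (φ '' S)).mp fun h =>
    hS.ne (by rw [h, ncard_univ])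
  exact chi2_le_of_isTwoDistColoring
    (isTwoDistColoring_extend hφ fun x hx hxc => hc ⟨x, hx, hxc⟩)

lemma vdeg_eliminate_le [Finite V] (hv : vdeg G v ≤ 2) (x : {x // x ≠ v}) :
    vdeg (eliminate G v) x ≤ vdeg G x := by
  by_cases hxv : G.Adj x v
  · have hx : 0 < vdeg G x := (ncard_pos).mpr ⟨v, hxv⟩
    calc vdeg (eliminate G v) x
        ≤ ({y | G.Adj x y} \ {v} ∪ {y | G.Adj v y} \ {x.1}).ncard := by
          refine ncard_le_ncard_of_injOn Subtype.val ?_ Subtype.val_injective.injOn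
          rintro y ⟨hxy, hy | ⟨-, hy⟩⟩
          · exact Or.inl ⟨hy, y.2⟩
          · exact Or.inr ⟨hy, fun e => hxy (Subtype.ext e).symm⟩
      _ ≤ ({y | G.Adj x y} \ {v}).ncard + ({y | G.Adj v y} \ {x.1}).ncard := ncard_union_le _ _
      _ = (vdeg G x - 1) + (vdeg G v - 1) := by
          rw [ncard_sdiff_singleton_of_mem (s := {y | G.Adj x y}) hxv,
            ncard_sdiff_singleton_of_mem (s := {y | G.Adj v y}) hxv.symm]
          rfl
      _ ≤ vdeg G x := by omega
  · refine ncard_le_ncard_of_injOn Subtype.val ?_ Subtype.val_injective.injOn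
    rintro y ⟨-, hy | ⟨hy, -⟩⟩
    · exact hy
    · exact absurd hy hxv

lemma ncard_edgeSet_eliminate_le [Finite V] (hv : vdeg G v ≤ 2) :
    (eliminate G v).edgeSet.ncard ≤ G.edgeSet.ncard := by
  have hmap : InjOn (Sym2.map Subtype.val) (eliminate G v).edgeSet :=
    (Sym2.map.injective Subtype.val_injective).injOn
  by_cases hnew : ∃ a b, a ≠ b ∧ G.Adj v a ∧ G.Adj v b ∧ ¬ G.Adj a b
  · obtain ⟨a, b, hab, ha, hb, hnab⟩ := hnew
    calc _ ≤ (insert s(a, b) (G.edgeSet \ {s(v, a)})).ncard := by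
          refine ncard_le_ncard_of_injOn _ ?_ hmap
          rintro ⟨x, y⟩ ⟨hxy, h | ⟨hx, hy⟩⟩
          · exact Or.inr ⟨h, fun e => by
              rcases Sym2.eq_iff.mp e with ⟨e, -⟩ | ⟨-, e⟩ <;> [exact x.2 e; exact y.2 e]⟩
          · exact Or.inl (sym2_eq_of_vdeg_le_two hv ha hb hab hx.symm hy
              fun e => hxy (Subtype.ext e))
      _ = G.edgeSet.ncard := ncard_exchange (fun h => hnab h) ha
  · push Not at hnew
    refine ncard_le_ncard_of_injOn _ ?_ hmap
    rintro ⟨x, y⟩ ⟨hxy, h | ⟨hx, hy⟩⟩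
    · exact h
    · exact hnew x y (fun e => hxy (Subtype.ext e)) hx.symm hy

lemma gsize_eliminate_lt [Finite V] (hv : vdeg G v ≤ 2) : gsize (eliminate G v) < gsize G :=
  Nat.add_lt_add_of_lt_of_le (Finite.card_subtype_lt (x := v) (not_not.mpr rfl))
    (ncard_edgeSet_eliminate_le hv)

end Eliminate

namespace PlaneEmbedding

variable (E : PlaneEmbedding G)

section Detour

variable {x v y : V}

def detour (hxv : G.Adj x v) (hvy : G.Adj v y) : Path (E.pos x) (E.pos y) :=
  (E.arc x v hxv).trans (E.arc v y hvy)

lemma detour_symm (hxv : G.Adj x v) (hvy : G.Adj v y) :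
    (E.detour hxv hvy).symm = E.detour hvy.symm hxv.symm := by
  rw [detour, detour, Path.trans_symm, ← E.arc_symm, ← E.arc_symm]

lemma eq_of_detour_eq_pos {hxv : G.Adj x v} {hvy : G.Adj v y} {t : unitInterval} {z : V}
    (h : E.detour hxv hvy t = E.pos z) : z = x ∨ z = v ∨ z = y := by
  have ht : E.detour hxv hvy t ∈ range (E.detour hxv hvy) := mem_range_self t
  rw [detour, Path.trans_range] at ht
  rcases ht with ⟨s, hs⟩ | ⟨s, hs⟩
  · rcases E.arc_vertex x v hxv s z (hs.trans h) with rfl | rfl <;> simp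
  · rcases E.arc_vertex v y hvy s z (hs.trans h) with rfl | rfl <;> simp

lemma exists_pos_of_arc_eq_detour {a b : V} (hab : G.Adj a b) (ha : a ≠ v) (hb : b ≠ v)
    (hxv : G.Adj x v) (hvy : G.Adj v y) {t t' : unitInterval}
    (h : E.arc a b hab t = E.detour hxv hvy t') : ∃ z, E.arc a b hab t = E.pos z := by
  have ht' : E.detour hxv hvy t' ∈ range (E.detour hxv hvy) := mem_range_self t'
  rw [detour, Path.trans_range] at ht'
  rcases ht' with ⟨s, hs⟩ | ⟨s, hs⟩
  · refine E.arc_meet a b x v hab hxv t s ?_ (h.trans hs.symm)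
    rw [Ne, Sym2.eq_iff]
    tauto
  · refine E.arc_meet a b v y hab hvy t s ?_ (h.trans hs.symm)
    rw [Ne, Sym2.eq_iff]
    tauto

/-- The two arcs of a detour meet only at `v`. -/
lemma eq_zero_of_arc_eq_arc (hxy : x ≠ y) (hxv : G.Adj x v) (hvy : G.Adj v y)
    {s s' : unitInterval} (h : E.arc x v hxv s = E.arc v y hvy s') : s' = 0 := by
  have hne : s(x, v) ≠ s(v, y) := by
    rw [Ne, Sym2.eq_iff]
    exact fun h' => h'.elim (fun h' => hxv.ne h'.1) fun h' => hxy h'.1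
  obtain ⟨z, hz⟩ := E.arc_meet x v v y hxv hvy s s' hne h
  have hzv : z = v := by
    rcases E.arc_vertex x v hxv s z hz with rfl | rfl
    · rcases E.arc_vertex v y hvy s' z (h.symm.trans hz) with h' | h'
      exacts [absurd h' hxv.ne, absurd h' hxy]
    · rfl
  refine E.arc_inj v y hvy ?_
  rw [← h, hz, hzv, Path.source]

lemma detour_injective (hxy : x ≠ y) (hxv : G.Adj x v) (hvy : G.Adj v y) :
    Function.Injective (E.detour hxv hvy) := by
  intro a b hab
  rw [detour, Path.trans_apply, Path.trans_apply] at hab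
  split_ifs at hab with ha hb hb
  · have := congrArg Subtype.val (E.arc_inj x v hxv hab)
    exact Subtype.ext (by simp only at this; linarith)
  · have := congrArg Subtype.val (E.eq_zero_of_arc_eq_arc hxy hxv hvy hab)
    simp only [Set.Icc.coe_zero] at this
    linarith
  · have := congrArg Subtype.val (E.eq_zero_of_arc_eq_arc hxy hxv hvy hab.symm)
    simp only [Set.Icc.coe_zero] at this
    linarith
  · have := congrArg Subtype.val (E.arc_inj v y hvy hab)
    exact Subtype.ext (by simp only at this; linarith)

end Detour

section Eliminate

variable {v : V}

open Classical in
def eliminateArc (x y : {x // x ≠ v}) (h : (eliminate G v).Adj x y) :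
    Path (E.pos x) (E.pos y) :=
  if hxy : G.Adj x y then E.arc x y hxy
  else E.detour (h.2.resolve_left hxy).1 (h.2.resolve_left hxy).2

lemma eliminateArc_of_adj {x y : {x // x ≠ v}} (h : (eliminate G v).Adj x y)
    (hxy : G.Adj x y) :
    E.eliminateArc x y h = E.arc x y hxy :=
  dif_pos hxy

lemma eliminateArc_of_not_adj {x y : {x // x ≠ v}} (h : (eliminate G v).Adj x y)
    (hxy : ¬ G.Adj x y) :
    E.eliminateArc x y h = E.detour (h.2.resolve_left hxy).1 (h.2.resolve_left hxy).2 :=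
  dif_neg hxy

lemma exists_pos_of_arc_eq_eliminateArc {a b x y : {x // x ≠ v}} (hab : G.Adj a b)
    (h : (eliminate G v).Adj x y) (hne : s(a.1, b.1) ≠ s(x.1, y.1)) {t t' : unitInterval}
    (heq : E.arc a b hab t = E.eliminateArc x y h t') :
    ∃ z : {x // x ≠ v}, E.arc a b hab t = E.pos z := by
  obtain ⟨z, hz⟩ : ∃ z, E.arc a b hab t = E.pos z := by
    by_cases hxy : G.Adj x y
    · rw [E.eliminateArc_of_adj h hxy] at heq
      exact E.arc_meet a b x y hab hxy t t' hne heq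
    · rw [E.eliminateArc_of_not_adj h hxy] at heq
      exact E.exists_pos_of_arc_eq_detour hab a.2 b.2 _ _ heq
  have hzv : z ≠ v := by
    rcases E.arc_vertex a b hab t z hz with rfl | rfl
    exacts [a.2, b.2]
  exact ⟨⟨z, hzv⟩, hz⟩

def eliminate [Finite V] (hv : vdeg G v ≤ 2) : PlaneEmbedding (TwoDistance.eliminate G v) where
  pos x := E.pos x
  pos_inj _ _ h := Subtype.ext (E.pos_inj h)
  arc := E.eliminateArc
  arc_symm x y h := by
    by_cases hxy : G.Adj x y
    · rw [E.eliminateArc_of_adj _ hxy.symm, E.eliminateArc_of_adj _ hxy, E.arc_symm]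
    · rw [E.eliminateArc_of_not_adj _ (fun h => hxy h.symm), E.eliminateArc_of_not_adj _ hxy,
        detour_symm]
  arc_inj x y h := by
    by_cases hxy : G.Adj x y
    · rw [E.eliminateArc_of_adj _ hxy]
      exact E.arc_inj x y hxy
    · rw [E.eliminateArc_of_not_adj _ hxy]
      exact E.detour_injective (fun e => h.1 (Subtype.ext e)) _ _
  arc_vertex x y h t z hz := by
    by_cases hxy : G.Adj x y
    · rw [E.eliminateArc_of_adj _ hxy] at hz
      exact (E.arc_vertex x y hxy t z hz).imp Subtype.ext Subtype.ext
    · rw [E.eliminateArc_of_not_adj _ hxy] at hz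
      rcases E.eq_of_detour_eq_pos hz with h' | h' | h'
      exacts [Or.inl (Subtype.ext h'), absurd h' z.2, Or.inr (Subtype.ext h')]
  arc_meet x y x' y' h h' t t' hne heq := by
    have hne' : s(x.1, y.1) ≠ s(x'.1, y'.1) := fun e =>
      hne (Sym2.map.injective Subtype.val_injective (by simpa only [Sym2.map_mk] using e))
    by_cases hxy : G.Adj x y
    · rw [E.eliminateArc_of_adj _ hxy] at heq ⊢
      exact E.exists_pos_of_arc_eq_eliminateArc hxy h' hne' heq
    by_cases hxy' : G.Adj x' y'
    · rw [E.eliminateArc_of_adj _ hxy'] at heq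
      obtain ⟨z, hz⟩ := E.exists_pos_of_arc_eq_eliminateArc hxy' h hne'.symm heq.symm
      exact ⟨z, heq.trans hz⟩
    obtain ⟨hxv, hvy⟩ := h.2.resolve_left hxy
    obtain ⟨hxv', hvy'⟩ := h'.2.resolve_left hxy'
    exact absurd (sym2_eq_of_vdeg_le_two hv hxv'.symm hvy' (fun e => h'.1 (Subtype.ext e))
      hxv.symm hvy fun e => h.1 (Subtype.ext e)) hne'

end Eliminate

end PlaneEmbedding

end TwoDistance

/-- A minimum counterexample has minimum degree at least 3. -/
theorem minDeg_ge_three {V : Type} (G : SimpleGraph V)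
    (hG : MinCounterexample G) :
    3 ≤ minDeg G := by
  obtain ⟨hfin, ⟨E⟩, hmax, hchi, hmin⟩ := hG
  have : Nonempty V := by
    by_contra! hV
    exact absurd hchi (by rw [chi2_eq_zero]; omega)
  obtain ⟨v, hv⟩ := exists_vdeg_eq_minDeg G
  by_contra! hlt
  replace hv : vdeg G v ≤ 2 := by omega
  have hΔ : ∀ x, vdeg G x ≤ 6 := fun x => (vdeg_le_maxDeg G x).trans hmax
  have hcol : chi2 (eliminate G v) ≤ 20 :=
    hmin _ _ inferInstance ⟨E.eliminate hv⟩
      (maxDeg_le_maxDeg fun x => ⟨x, vdeg_eliminate_le hv x⟩) (gsize_eliminate_lt hv)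
  have hball := ncard_withinTwo_le hΔ v
  have : chi2 G ≤ 20 := chi2_le_of_chi2_eliminate_le hcol (by omega)
  omega
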